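/- arXiv:2510.18713 — 5 statements merged into one kernel-verified Lean document; each statement's English description precedes it below -/
import Mathlib

section
/- Let {z_{ta}}_{t≥1, a∈S_t} be a bounded sequence of vectors in R^d with ‖z_{ta}‖₂ ≤ X for all t, a, where each S_t is a finite index set with |S_t| ≤ K. Define Λ_t := λI_d + Σ_{s=1}^{t-1} Σ_{a∈S_s} z_{sa} z_{sa}ᵀ for λ > 0. Then Σ_{t=1}^T min{1, Σ_{a∈S_t} ‖z_{ta}‖²_{Λ_t⁻¹}} ≤ 2d log(1 + X²KT/(dλ)). -/
open Matrix Finset Real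

section EllipticAux

variable {d : ℕ}

private lemma one_add_sum_le_prod' {ι : Type*} (s : Finset ι) (f : ι → ℝ)
    (hf : ∀ i ∈ s, 0 ≤ f i) : 1 + ∑ i ∈ s, f i ≤ ∏ i ∈ s, (1 + f i) := by
  induction s using Finset.cons_induction with
  | empty => simp
  | cons a s ha ih =>
    rw [Finset.sum_cons, Finset.prod_cons]
    have h1 : 0 ≤ f a := hf a (Finset.mem_cons_self a s)
    have h2 : ∀ i ∈ s, 0 ≤ f i := fun i hi => hf i (Finset.mem_cons_of_mem hi)
    have ih' := ih h2
    have hs : 0 ≤ ∑ i ∈ s, f i := Finset.sum_nonneg h2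
    nlinarith [mul_le_mul_of_nonneg_left ih' (by linarith : (0:ℝ) ≤ 1 + f a)]

private lemma min_one_le_two_log' {x : ℝ} (hx : 0 ≤ x) : min 1 x ≤ 2 * Real.log (1 + x) := by
  rcases le_total x 1 with h | h
  · rw [min_eq_right h]
    have h1 : (0:ℝ) < 1 + x := by linarith
    have hlog : 1 - (1+x)⁻¹ ≤ Real.log (1 + x) := by
      have h0 : (0:ℝ) < (1+x)⁻¹ := by positivity
      have := Real.log_le_sub_one_of_pos h0
      rw [Real.log_inv] at this
      linarith
    have hx2 : x / (1+x) = 1 - (1+x)⁻¹ := by field_simp; ring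
    have hstep : x ≤ 2 * (x / (1+x)) := by
      rw [mul_div_assoc', le_div_iff₀ h1]; nlinarith
    calc x ≤ 2 * (x / (1+x)) := hstep
      _ ≤ 2 * Real.log (1+x) := by rw [hx2]; linarith
  · rw [min_eq_left h]
    have h2 : Real.log 2 ≤ Real.log (1+x) := Real.log_le_log (by norm_num) (by linarith)
    have hl2 : (0.6931471803:ℝ) < Real.log 2 := Real.log_two_gt_d9
    linarith

private lemma trace_eq_sum_eig' {A : Matrix (Fin d) (Fin d) ℝ} (hA : A.IsHermitian) :
    A.trace = ∑ i, hA.eigenvalues i := by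
  conv_lhs => rw [hA.spectral_theorem, Unitary.conjStarAlgAut_apply]
  rw [Matrix.trace_mul_comm, ← mul_assoc]
  rw [(Matrix.mem_unitaryGroup_iff').mp (hA.eigenvectorUnitary).2, one_mul, Matrix.trace_diagonal]
  simp

private lemma det_eq_prod_eig' {A : Matrix (Fin d) (Fin d) ℝ} (hA : A.IsHermitian) :
    A.det = ∏ i, hA.eigenvalues i := by
  have := hA.det_eq_prod_eigenvalues
  simpa using this

private lemma one_add_trace_le_det' {M : Matrix (Fin d) (Fin d) ℝ} (hM : M.PosSemidef) :
    1 + M.trace ≤ (1 + M).det := by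
  set U := (hM.1.eigenvectorUnitary : Matrix (Fin d) (Fin d) ℝ) with hU
  have hUU : U * star U = 1 := (Matrix.mem_unitaryGroup_iff).mp (hM.1.eigenvectorUnitary).2
  have hUU' : star U * U = 1 := (Matrix.mem_unitaryGroup_iff').mp (hM.1.eigenvectorUnitary).2
  have hspec : M = U * Matrix.diagonal (RCLike.ofReal ∘ hM.1.eigenvalues) * star U :=
    hM.1.spectral_theorem
  have hdecomp : 1 + M = U * (1 + Matrix.diagonal (RCLike.ofReal ∘ hM.1.eigenvalues)) * star U := by
    rw [mul_add, add_mul, mul_one, hUU, ← hspec]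
  have hdet : (1 + M).det = ∏ i, (1 + hM.1.eigenvalues i) := by
    rw [hdecomp, Matrix.det_mul, Matrix.det_mul, mul_comm, ← mul_assoc, ← Matrix.det_mul, hUU',
      Matrix.det_one, one_mul]
    have : (1 : Matrix (Fin d) (Fin d) ℝ) + Matrix.diagonal (RCLike.ofReal ∘ hM.1.eigenvalues)
        = Matrix.diagonal (fun i => 1 + hM.1.eigenvalues i) := by
      rw [← Matrix.diagonal_one, Matrix.diagonal_add]
      simp [Function.comp]
    rw [this, Matrix.det_diagonal]
  rw [hdet, trace_eq_sum_eig' hM.1]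
  exact one_add_sum_le_prod' _ _ (fun i _ => hM.eigenvalues_nonneg i)

open scoped MatrixOrder in
private lemma det_mul_one_add_trace_le' {A B : Matrix (Fin d) (Fin d) ℝ}
    (hA : A.PosDef) (hB : B.PosSemidef) :
    A.det * (1 + (A⁻¹ * B).trace) ≤ (A + B).det := by
  set R := CFC.sqrt A with hRdef
  have hR2 : R * R = A := CFC.sqrt_mul_sqrt_self A hA.posSemidef.nonneg
  have hRps : R.PosSemidef := (CFC.sqrt_nonneg A).posSemidef
  have hdetR : R.det * R.det = A.det := by rw [← Matrix.det_mul, hR2]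
  have hdetA : 0 < A.det := hA.det_pos
  have hdetRne : R.det ≠ 0 := by
    intro h; rw [h, mul_zero] at hdetR; exact hdetA.ne' hdetR.symm
  have hRunit : IsUnit R.det := isUnit_iff_ne_zero.mpr hdetRne
  have hRiR : R⁻¹ * R = 1 := Matrix.nonsing_inv_mul R hRunit
  have hRRi : R * R⁻¹ = 1 := Matrix.mul_nonsing_inv R hRunit
  have hRiH : (R⁻¹)ᴴ = R⁻¹ := by rw [Matrix.conjTranspose_nonsing_inv, hRps.1]
  set M := R⁻¹ * B * R⁻¹ with hMdef
  have hMps : M.PosSemidef := by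
    have := hB.conjTranspose_mul_mul_same (B := R⁻¹)
    rwa [hRiH] at this
  have hdecomp : A + B = R * (1 + M) * R := by
    rw [mul_add, mul_one, add_mul, hR2, hMdef]
    congr 1
    have : R * (R⁻¹ * B * R⁻¹) * R = (R * R⁻¹) * B * (R⁻¹ * R) := by
      simp only [Matrix.mul_assoc]
    rw [this, hRRi, hRiR, one_mul, mul_one]
  have htr : M.trace = (A⁻¹ * B).trace := by
    rw [hMdef, Matrix.trace_mul_cycle, ← Matrix.mul_inv_rev, hR2]
  have hkey := one_add_trace_le_det' hMps
  rw [htr] at hkey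
  calc A.det * (1 + (A⁻¹ * B).trace) ≤ A.det * (1 + M).det :=
        mul_le_mul_of_nonneg_left hkey hdetA.le
    _ = (A + B).det := by
        rw [hdecomp, Matrix.det_mul, Matrix.det_mul, ← hdetR]; ring

private lemma det_le_trace_div_pow' (hd : 0 < d) {A : Matrix (Fin d) (Fin d) ℝ}
    (hA : A.PosSemidef) : A.det ≤ (A.trace / d) ^ d := by
  set μ := hA.1.eigenvalues with hμ
  have hμ0 : ∀ i, 0 ≤ μ i := hA.eigenvalues_nonneg
  have hdne : (d:ℝ) ≠ 0 := Nat.cast_ne_zero.mpr hd.ne'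
  have hkey : ∏ i, μ i ^ (1/(d:ℝ)) ≤ ∑ i, (1/(d:ℝ)) * μ i :=
    Real.geom_mean_le_arith_mean_weighted Finset.univ (fun _ => 1/(d:ℝ)) μ
      (fun i _ => by positivity) (by simp [Finset.sum_const]; field_simp)
      (fun i _ => hμ0 i)
  have hsum : ∑ i, (1/(d:ℝ)) * μ i = A.trace / d := by
    rw [trace_eq_sum_eig' hA.1, Finset.sum_div]
    exact Finset.sum_congr rfl fun i _ => by rw [one_div, div_eq_inv_mul]
  have hL : (∏ i, μ i ^ (1/(d:ℝ))) ^ d = ∏ i, μ i := by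
    rw [← Finset.prod_pow]
    refine Finset.prod_congr rfl (fun i _ => ?_)
    rw [← Real.rpow_natCast (μ i ^ (1/(d:ℝ))) d, ← Real.rpow_mul (hμ0 i),
      one_div, inv_mul_cancel₀ hdne, Real.rpow_one]
  have hprodnn : 0 ≤ ∏ i, μ i ^ (1/(d:ℝ)) :=
    Finset.prod_nonneg (fun i _ => Real.rpow_nonneg (hμ0 i) _)
  rw [det_eq_prod_eig' hA.1, ← hL]
  calc (∏ i, μ i ^ (1/(d:ℝ))) ^ d ≤ (∑ i, (1/(d:ℝ)) * μ i) ^ d :=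
        pow_le_pow_left₀ hprodnn hkey d
    _ = (A.trace / d) ^ d := by rw [hsum]

private lemma vecMulVec_posSemidef' (v : Fin d → ℝ) : (vecMulVec v v).PosSemidef := by
  have h := Matrix.posSemidef_conjTranspose_mul_self (Matrix.replicateRow Unit v)
  rw [Matrix.conjTranspose_replicateRow, show star v = v from star_trivial v] at h
  rwa [Matrix.vecMulVec_eq Unit]

private lemma trace_mul_vecMulVec' (M : Matrix (Fin d) (Fin d) ℝ) (v : Fin d → ℝ) :
    (M * vecMulVec v v).trace = v ⬝ᵥ (M *ᵥ v) := by
  simp only [Matrix.trace, Matrix.diag, Matrix.mul_apply, Matrix.vecMulVec_apply,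
    dotProduct, Matrix.mulVec, Finset.mul_sum]
  refine Finset.sum_congr rfl fun i _ => Finset.sum_congr rfl fun j _ => by ring

end EllipticAux

/-- Elliptical potential lemma for assortments. -/
theorem stmt_0 (d T K : ℕ) (hd : 0 < d) (X lam : ℝ) (hlam : 0 < lam)
    (S : ℕ → Finset ℕ) (hK : ∀ t, (S t).card ≤ K)
    (z : ℕ → ℕ → Fin d → ℝ)
    (hz : ∀ t a, a ∈ S t → Real.sqrt (z t a ⬝ᵥ z t a) ≤ X)
    (Λ : ℕ → Matrix (Fin d) (Fin d) ℝ)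
    (hΛ : ∀ t, Λ t = lam • (1 : Matrix (Fin d) (Fin d) ℝ) +
      ∑ s ∈ Finset.Icc 1 (t - 1), ∑ a ∈ S s, vecMulVec (z s a) (z s a)) :
    ∑ t ∈ Finset.Icc 1 T, min 1 (∑ a ∈ S t, z t a ⬝ᵥ ((Λ t)⁻¹ *ᵥ z t a)) ≤
      2 * d * Real.log (1 + X ^ 2 * K * T / (d * lam)) := by
  classical
  set A : ℕ → Matrix (Fin d) (Fin d) ℝ :=
    fun t => ∑ a ∈ S t, vecMulVec (z t a) (z t a) with hAdef
  have hAps : ∀ t, (A t).PosSemidef := fun t =>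
    Finset.sum_induction _ _ (fun a b ha hb => ha.add hb) Matrix.PosSemidef.zero
      (fun a _ => vecMulVec_posSemidef' _)
  have hsmul : (lam • (1 : Matrix (Fin d) (Fin d) ℝ)).PosDef := by
    rw [Matrix.smul_one_eq_diagonal]
    exact Matrix.posDef_diagonal_iff.mpr (fun i => hlam)
  have hPD : ∀ t, (Λ t).PosDef := by
    intro t; rw [hΛ t]
    exact hsmul.add_posSemidef <| Finset.sum_induction _ _ (fun a b ha hb => ha.add hb)
      Matrix.PosSemidef.zero (fun s _ => hAps s)
  set f : ℕ → ℝ := fun t => ∑ a ∈ S t, z t a ⬝ᵥ ((Λ t)⁻¹ *ᵥ z t a) with hfdef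
  have hf0 : ∀ t, 0 ≤ f t := by
    intro t
    refine Finset.sum_nonneg fun a _ => ?_
    have := ((hPD t).inv.posSemidef).dotProduct_mulVec_nonneg (z t a)
    simpa using this
  have hftr : ∀ t, f t = ((Λ t)⁻¹ * A t).trace := by
    intro t
    rw [hfdef, hAdef]
    simp only
    rw [Matrix.mul_sum, Matrix.trace_sum]
    exact Finset.sum_congr rfl fun a _ => (trace_mul_vecMulVec' _ _).symm
  have hrec : ∀ t, 1 ≤ t → Λ (t + 1) = Λ t + A t := by
    intro t ht
    obtain ⟨k, rfl⟩ : ∃ k, t = k + 1 := ⟨t - 1, by omega⟩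
    rw [hΛ (k + 1 + 1), hΛ (k + 1)]
    have e1 : k + 1 + 1 - 1 = k + 1 := by omega
    have e2 : k + 1 - 1 = k := by omega
    rw [e1, e2, Finset.sum_Icc_succ_top (by omega : 1 ≤ k + 1), add_assoc]
  have hstep : ∀ t, 1 ≤ t →
      min 1 (f t) ≤ 2 * (Real.log (Λ (t + 1)).det - Real.log (Λ t).det) := by
    intro t ht
    have hdet_t : 0 < (Λ t).det := (hPD t).det_pos
    have h1f : 0 < 1 + f t := by linarith [hf0 t]
    have hmul : (Λ t).det * (1 + f t) ≤ (Λ (t + 1)).det := by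
      rw [hrec t ht, hftr t]
      exact det_mul_one_add_trace_le' (hPD t) (hAps t)
    have hlog : Real.log ((Λ t).det * (1 + f t)) ≤ Real.log (Λ (t + 1)).det :=
      Real.log_le_log (by positivity) hmul
    rw [Real.log_mul hdet_t.ne' h1f.ne'] at hlog
    have := min_one_le_two_log' (hf0 t)
    linarith
  have htel : ∑ t ∈ Finset.Icc 1 T, (Real.log (Λ (t + 1)).det - Real.log (Λ t).det)
      = Real.log (Λ (T + 1)).det - Real.log (Λ 1).det := by
    rw [← Finset.Ico_add_one_right_eq_Icc, Finset.sum_Ico_eq_sum_range]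
    have := Finset.sum_range_sub (f := fun i => Real.log (Λ (i + 1)).det) T
    simpa [Nat.add_sub_cancel, add_comm, add_assoc, add_left_comm] using this
  have hsum1 : ∑ t ∈ Finset.Icc 1 T, min 1 (f t)
      ≤ 2 * (Real.log (Λ (T + 1)).det - Real.log (Λ 1).det) := by
    calc ∑ t ∈ Finset.Icc 1 T, min 1 (f t)
        ≤ ∑ t ∈ Finset.Icc 1 T, 2 * (Real.log (Λ (t + 1)).det - Real.log (Λ t).det) :=
          Finset.sum_le_sum fun t htmem => hstep t (Finset.mem_Icc.mp htmem).1
      _ = 2 * ∑ t ∈ Finset.Icc 1 T, (Real.log (Λ (t + 1)).det - Real.log (Λ t).det) := by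
          rw [Finset.mul_sum]
      _ = _ := by rw [htel]
  have hΛ1 : Real.log (Λ 1).det = d * Real.log lam := by
    rw [hΛ 1]
    have : Finset.Icc 1 (1 - 1) = (∅ : Finset ℕ) := by simp
    rw [this, Finset.sum_empty, add_zero, Matrix.det_smul, Matrix.det_one, mul_one,
      Fintype.card_fin, Real.log_pow]
  have htraceA : ∀ s, (A s).trace ≤ K * X ^ 2 := by
    intro s
    rw [hAdef]
    simp only
    rw [Matrix.trace_sum]
    have hterm : ∀ a ∈ S s, (vecMulVec (z s a) (z s a)).trace ≤ X ^ 2 := by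
      intro a ha
      have h1 : (vecMulVec (z s a) (z s a)).trace = z s a ⬝ᵥ z s a := by
        simp [Matrix.trace, Matrix.diag, Matrix.vecMulVec_apply, dotProduct]
      rw [h1]
      have h2 : 0 ≤ z s a ⬝ᵥ z s a := Finset.sum_nonneg fun i _ => mul_self_nonneg _
      have := hz s a ha
      nlinarith [Real.sq_sqrt h2, Real.sqrt_nonneg (z s a ⬝ᵥ z s a)]
    calc ∑ a ∈ S s, (vecMulVec (z s a) (z s a)).trace ≤ ∑ a ∈ S s, X ^ 2 :=
          Finset.sum_le_sum hterm
      _ = (S s).card * X ^ 2 := by rw [Finset.sum_const, nsmul_eq_mul]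
      _ ≤ K * X ^ 2 := by
          have hX2 : (0:ℝ) ≤ X ^ 2 := sq_nonneg X
          have : ((S s).card : ℝ) ≤ K := Nat.cast_le.mpr (hK s)
          nlinarith
  have htrace : (Λ (T + 1)).trace ≤ d * lam + X ^ 2 * K * T := by
    rw [hΛ (T + 1)]
    have e1 : T + 1 - 1 = T := by omega
    rw [e1, Matrix.trace_add, Matrix.trace_smul, Matrix.trace_one]
    have h2 : (∑ s ∈ Finset.Icc 1 T, A s).trace ≤ T * (K * X ^ 2) := by
      rw [Matrix.trace_sum]
      calc ∑ s ∈ Finset.Icc 1 T, (A s).trace ≤ ∑ s ∈ Finset.Icc 1 T, K * X ^ 2 :=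
            Finset.sum_le_sum fun s _ => htraceA s
        _ = (Finset.Icc 1 T).card * (K * X ^ 2) := by rw [Finset.sum_const, nsmul_eq_mul]
        _ ≤ T * (K * X ^ 2) := by
            rw [Nat.card_Icc]
            norm_num
    rw [Fintype.card_fin]
    simp only [smul_eq_mul]
    nlinarith [h2]
  have hdpos : (0:ℝ) < d := Nat.cast_pos.mpr hd
  have hquotpos : (0:ℝ) < 1 + X ^ 2 * K * T / (d * lam) := by positivity
  have hub : (Λ (T + 1)).det ≤ (lam + X ^ 2 * K * T / d) ^ d := by
    refine le_trans (det_le_trace_div_pow' hd (hPD (T + 1)).posSemidef) ?_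
    have htrnn : 0 ≤ (Λ (T + 1)).trace := by
      rw [trace_eq_sum_eig' (hPD (T + 1)).posSemidef.1]
      exact Finset.sum_nonneg fun i _ => (hPD (T + 1)).posSemidef.eigenvalues_nonneg i
    refine pow_le_pow_left₀ (by positivity) ?_ d
    rw [div_le_iff₀ hdpos]
    calc (Λ (T + 1)).trace ≤ d * lam + X ^ 2 * K * T := htrace
      _ = (lam + X ^ 2 * K * T / d) * d := by field_simp
  have hlogub : Real.log (Λ (T + 1)).det ≤ d * Real.log (lam + X ^ 2 * K * T / d) := by
    have := Real.log_le_log (hPD (T + 1)).det_pos hub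
    rwa [Real.log_pow] at this
  have heq : lam + X ^ 2 * K * T / d = lam * (1 + X ^ 2 * K * T / (d * lam)) := by
    field_simp
  have hlogeq : Real.log (lam + X ^ 2 * K * T / d)
      = Real.log lam + Real.log (1 + X ^ 2 * K * T / (d * lam)) := by
    rw [heq, Real.log_mul hlam.ne' hquotpos.ne']
  show ∑ t ∈ Finset.Icc 1 T, min 1 (f t) ≤ _
  calc ∑ t ∈ Finset.Icc 1 T, min 1 (f t)
      ≤ 2 * (Real.log (Λ (T + 1)).det - Real.log (Λ 1).det) := hsum1
    _ ≤ 2 * d * Real.log (1 + X ^ 2 * K * T / (d * lam)) := by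
        rw [hΛ1]
        have := hlogub
        rw [hlogeq] at this
        nlinarith [this]
end

section
/- Let {z_{ta}} be vectors in R^d with ‖z_{ta}‖₂ ≤ X, each S_t a finite set with |S_t| ≤ K, and Λ_t := λI_d + Σ_{s=1}^{t-1} Σ_{a∈S_s} z_{sa} z_{sa}ᵀ with λ > 0. Let T₀ ⊆ [T] be the set of rounds t where Σ_{a∈S_t} ‖z_{ta}‖²_{Λ_t⁻¹} ≥ L for some L > 0. Then |T₀| ≤ (2d / log(1+L)) · log(1 + X²K / (log(1+L) λ)). -/
/-!
Let `A_t = ∑_{a ∈ S_t} z_{ta} z_{ta}ᵀ` and, for `t ∈ T₀`, let `W_t = λ I + ∑_{s ∈ T₀, s < t} A_s`.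
Since `W_t ≤ Λ_t`, the potential `tr (W_t⁻¹ A_t)` is still at least `L`, and
`det (W + A) ≥ det W · (1 + tr (W⁻¹ A))` for positive semidefinite `A` makes the determinant
grow by a factor `1 + L` in every round of `T₀`. Hence, by AM–GM on the eigenvalues,
`λ^d (1 + L)^|T₀| ≤ det W ≤ (tr W / d)^d ≤ (λ + |T₀| K X² / d)^d`. Finally
`n log (1 + L) ≤ d log (1 + n c / d)` with `c = K X² / λ` forces
`n ≤ 2 d / log (1 + L) · log (1 + c / log (1 + L))` by concavity of the logarithm.
-/

open Matrix Finset Real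
open scoped MatrixOrder

theorem Finset.one_add_sum_le_prod_one_add {ι R : Type*} [CommSemiring R] [PartialOrder R]
    [IsOrderedRing R] (s : Finset ι) {f : ι → R} (hf : ∀ i ∈ s, 0 ≤ f i) :
    1 + ∑ i ∈ s, f i ≤ ∏ i ∈ s, (1 + f i) := by
  classical
  induction s using Finset.induction_on with
  | empty => simp
  | insert a s ha ih =>
    rw [sum_insert ha, prod_insert ha]
    have hfa := hf a (mem_insert_self a s)
    have hs := sum_nonneg fun i hi => hf i (mem_insert_of_mem hi)
    calc 1 + (f a + ∑ i ∈ s, f i)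
        ≤ 1 + (f a + ∑ i ∈ s, f i) + f a * ∑ i ∈ s, f i :=
          le_add_of_nonneg_right (mul_nonneg hfa hs)
      _ = (1 + f a) * (1 + ∑ i ∈ s, f i) := by ring
      _ ≤ (1 + f a) * ∏ i ∈ s, (1 + f i) := by
          gcongr
          · exact add_nonneg zero_le_one hfa
          · exact ih fun i hi => hf i (mem_insert_of_mem hi)

theorem Real.prod_le_sum_div_card_pow {ι : Type*} (s : Finset ι) {f : ι → ℝ}
    (hf : ∀ i ∈ s, 0 ≤ f i) : ∏ i ∈ s, f i ≤ ((∑ i ∈ s, f i) / #s) ^ #s := by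
  rcases s.eq_empty_or_nonempty with rfl | hs
  · simp
  have hcard : (0 : ℝ) < #s := by exact_mod_cast hs.card_pos
  have amgm := geom_mean_le_arith_mean_weighted s (fun _ => (#s : ℝ)⁻¹) f
    (fun _ _ => by positivity) (by simp [hcard.ne']) hf
  rw [← mul_sum, inv_mul_eq_div, finsetProd_rpow s f hf] at amgm
  calc ∏ i ∈ s, f i = ((∏ i ∈ s, f i) ^ (#s : ℝ)⁻¹) ^ #s := by
        rw [← rpow_natCast, ← rpow_mul (prod_nonneg hf), inv_mul_cancel₀ hcard.ne', rpow_one]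
    _ ≤ ((∑ i ∈ s, f i) / #s) ^ #s := by gcongr; exact rpow_nonneg (prod_nonneg hf) _

namespace Matrix

variable {n : Type*} [Fintype n]

lemma trace_mul_vecMulVec_self (M : Matrix n n ℝ) (x : n → ℝ) :
    (M * vecMulVec x x).trace = x ⬝ᵥ M *ᵥ x := by
  rw [mul_vecMulVec, trace_vecMulVec, dotProduct_comm]

lemma posSemidef_sum_vecMulVec_self {ι : Type*} (s : Finset ι) (z : ι → n → ℝ) :
    (∑ a ∈ s, vecMulVec (z a) (z a)).PosSemidef :=
  posSemidef_sum s fun a _ => by simpa using posSemidef_vecMulVec_self_star (z a)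

lemma trace_sum_vecMulVec_self_le {ι : Type*} (s : Finset ι) (z : ι → n → ℝ) {c : ℝ}
    (hz : ∀ a ∈ s, z a ⬝ᵥ z a ≤ c) : (∑ a ∈ s, vecMulVec (z a) (z a)).trace ≤ #s * c := by
  simpa [trace_sum, trace_vecMulVec] using sum_le_card_nsmul s _ c hz

variable [DecidableEq n]

lemma PosDef.two_mul_dotProduct_sub_le {A : Matrix n n ℝ} (hA : A.PosDef) (x y : n → ℝ) :
    2 * (x ⬝ᵥ y) - y ⬝ᵥ A *ᵥ y ≤ x ⬝ᵥ A⁻¹ *ᵥ x := by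
  have hAw : A *ᵥ (A⁻¹ *ᵥ x) = x := by
    rw [mulVec_mulVec, mul_nonsing_inv _ hA.det_pos.ne'.isUnit, one_mulVec]
  have hsymm : y ⬝ᵥ A *ᵥ (A⁻¹ *ᵥ x) = (A⁻¹ *ᵥ x) ⬝ᵥ A *ᵥ y := by
    rw [dotProduct_mulVec, ← mulVec_transpose, dotProduct_comm,
      ← conjTranspose_eq_transpose_of_trivial, hA.isHermitian.eq]
  have := hA.posSemidef.dotProduct_mulVec_nonneg (A⁻¹ *ᵥ x - y)
  simp only [star_trivial, mulVec_sub, dotProduct_sub, sub_dotProduct] at this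
  rw [← hsymm, hAw, dotProduct_comm _ x, dotProduct_comm y x] at this
  linarith

-- Evaluate the lower bound for `A` at `y = B⁻¹ x`, where the one for `B` is an equality.
lemma dotProduct_inv_mulVec_antitone {A B : Matrix n n ℝ} (hA : A.PosDef) (hAB : A ≤ B)
    (x : n → ℝ) : x ⬝ᵥ B⁻¹ *ᵥ x ≤ x ⬝ᵥ A⁻¹ *ᵥ x := by
  have hB : B.PosDef := by simpa using hA.add_posSemidef (le_iff.mp hAB)
  have hBw : B *ᵥ (B⁻¹ *ᵥ x) = x := by
    rw [mulVec_mulVec, mul_nonsing_inv _ hB.det_pos.ne'.isUnit, one_mulVec]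
  have hgap := (le_iff.mp hAB).dotProduct_mulVec_nonneg (B⁻¹ *ᵥ x)
  simp only [star_trivial, sub_mulVec, dotProduct_sub, hBw] at hgap
  rw [dotProduct_comm (B⁻¹ *ᵥ x) x] at hgap
  linarith [hA.two_mul_dotProduct_sub_le x (B⁻¹ *ᵥ x)]

lemma trace_inv_mul_sum_vecMulVec_self_antitone {A B : Matrix n n ℝ} (hA : A.PosDef)
    (hAB : A ≤ B) {ι : Type*} (s : Finset ι) (z : ι → n → ℝ) :
    (B⁻¹ * ∑ a ∈ s, vecMulVec (z a) (z a)).trace ≤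
      (A⁻¹ * ∑ a ∈ s, vecMulVec (z a) (z a)).trace := by
  simp only [mul_sum, trace_sum, trace_mul_vecMulVec_self]
  exact sum_le_sum fun a _ => dotProduct_inv_mulVec_antitone hA hAB (z a)

lemma PosSemidef.one_add_trace_le_det_one_add {M : Matrix n n ℝ} (hM : M.PosSemidef) :
    1 + M.trace ≤ (1 + M).det := by
  have hMsa : IsSelfAdjoint M := hM.1
  have h1 : cfc (fun x => (1 : ℝ) + x) M = 1 + M := by
    rw [cfc_const_add (1 : ℝ) (fun x => x) M, cfc_id' ℝ M, map_one]
  rw [← h1, hM.1.cfc_eq]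
  simpa [IsHermitian.cfc, -Unitary.conjStarAlgAut_apply, hM.1.trace_eq_sum_eigenvalues] using
    one_add_sum_le_prod_one_add univ fun i _ => hM.eigenvalues_nonneg i

lemma PosSemidef.det_le_trace_div_card_pow {M : Matrix n n ℝ} (hM : M.PosSemidef) :
    M.det ≤ (M.trace / Fintype.card n) ^ Fintype.card n := by
  simpa [hM.1.det_eq_prod_eigenvalues, hM.1.trace_eq_sum_eigenvalues] using
    Real.prod_le_sum_div_card_pow univ fun i _ => hM.eigenvalues_nonneg i

lemma PosSemidef.det_smul_one_add_le {M : Matrix n n ℝ} (hM : M.PosSemidef) {lam : ℝ}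
    (hlam : 0 ≤ lam) :
    (lam • 1 + M).det ≤ ((lam * Fintype.card n + M.trace) / Fintype.card n) ^ Fintype.card n := by
  simpa [trace_add, trace_smul, mul_comm lam] using
    ((PosSemidef.one.smul hlam).add hM).det_le_trace_div_card_pow

lemma PosDef.det_mul_one_add_trace_le_det_add {V A : Matrix n n ℝ} (hV : V.PosDef)
    (hA : A.PosSemidef) : V.det * (1 + (V⁻¹ * A).trace) ≤ (V + A).det := by
  -- factor `A = Cᴴ C` and use `det (1 + V⁻¹ Cᴴ C) = det (1 + C V⁻¹ Cᴴ)` (Sylvester)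
  obtain ⟨C, rfl⟩ := CStarAlgebra.nonneg_iff_eq_star_mul_self.mp hA.nonneg
  have hVA : V + star C * C = V * (1 + (V⁻¹ * star C) * C) := by
    rw [Matrix.mul_add, mul_one, ← Matrix.mul_assoc, ← Matrix.mul_assoc,
      mul_nonsing_inv _ hV.det_pos.ne'.isUnit, Matrix.one_mul]
  have hM : (C * V⁻¹ * star C).PosSemidef := hV.inv.posSemidef.mul_mul_conjTranspose_same C
  have htr : (C * V⁻¹ * star C).trace = (V⁻¹ * (star C * C)).trace := by
    rw [trace_mul_cycle, trace_mul_cycle, Matrix.mul_assoc]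
  rw [hVA, det_mul, det_one_add_mul_comm, ← htr, ← Matrix.mul_assoc]
  exact mul_le_mul_of_nonneg_left hM.one_add_trace_le_det_one_add hV.det_pos.le

theorem det_mul_one_add_pow_card_le_det_add_sum {ι : Type*} [LinearOrder ι] {V : Matrix n n ℝ}
    (hV : V.PosDef) {A : ι → Matrix n n ℝ} (hA : ∀ i, (A i).PosSemidef) {L : ℝ}
    (hL : 0 ≤ L) (F : Finset ι) (hF : ∀ t ∈ F, L ≤ ((V + ∑ s ∈ F with s < t, A s)⁻¹ * A t).trace) :
    V.det * (1 + L) ^ #F ≤ (V + ∑ s ∈ F, A s).det := by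
  classical
  induction F using Finset.induction_on_max with
  | empty => simp
  | insert t G hlt ih =>
    have ht : t ∉ G := fun h => (hlt t h).false
    have hfilter (s : ι) (hst : s ≤ t) : {x ∈ insert t G | x < s} = {x ∈ G | x < s} := by
      rw [filter_insert, if_neg (not_lt.mpr hst)]
    have hW : (V + ∑ s ∈ G, A s).PosDef := hV.add_posSemidef (posSemidef_sum G fun i _ => hA i)
    have hLt : L ≤ ((V + ∑ s ∈ G, A s)⁻¹ * A t).trace := by
      have := hF t (mem_insert_self t G)
      rwa [hfilter t le_rfl, filter_true_of_mem hlt] at this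
    have hG : V.det * (1 + L) ^ #G ≤ (V + ∑ s ∈ G, A s).det := by
      refine ih fun s hs => ?_
      have := hF s (mem_insert_of_mem hs)
      rwa [hfilter s (hlt s hs).le] at this
    calc V.det * (1 + L) ^ #(insert t G)
        = V.det * (1 + L) ^ #G * (1 + L) := by rw [card_insert_of_notMem ht, pow_succ, mul_assoc]
      _ ≤ (V + ∑ s ∈ G, A s).det * (1 + ((V + ∑ s ∈ G, A s)⁻¹ * A t).trace) := by
          gcongr
          exact hW.det_pos.le
      _ ≤ (V + ∑ s ∈ insert t G, A s).det := by
          rw [sum_insert ht, add_comm (A t), ← add_assoc]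
          exact hW.det_mul_one_add_trace_le_det_add (hA t)

end Matrix

namespace Real

theorem log_one_add_lt_one_add_half {u : ℝ} (hu : 0 ≤ u) : log (1 + u) < 1 + u / 2 := by
  have h := log_le_sub_one_of_pos (show 0 < (1 + u) / 2 by positivity)
  rw [log_div (by positivity) two_ne_zero] at h
  linarith [log_two_lt_d9]

theorem le_two_mul_mul_log_of_le_mul_log {u x : ℝ} (hu : 0 < u) (h : x ≤ u * log (1 + x)) :
    x ≤ 2 * u * log (1 + u) := by
  set x₀ := 2 * u * log (1 + u)
  have hx₀ : 0 < x₀ := by have := log_pos (by linarith : 1 < 1 + u); positivity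
  by_contra! hlt
  have hx : 0 < x := hx₀.trans hlt
  set b := x₀ / x
  have hbx : b * x = x₀ := div_mul_cancel₀ x₀ hx.ne'
  have hb0 : 0 ≤ b := by positivity
  have hb1 : b ≤ 1 := (div_le_one hx).mpr hlt.le
  have hbern : (1 + x) ^ b ≤ 1 + x₀ := by
    rw [← hbx]
    exact rpow_one_add_le_one_add_mul_self (by linarith) hb0 hb1
  have hreach : x₀ ≤ u * log (1 + x₀) :=
    calc x₀ = b * x := hbx.symm
      _ ≤ b * (u * log (1 + x)) := by gcongr
      _ = u * log ((1 + x) ^ b) := by rw [log_rpow (by linarith)]; ring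
      _ ≤ u * log (1 + x₀) := by gcongr
  -- `log (1 + u) < 1 + u / 2` makes `1 + x₀ < (1 + u) ^ 2`, i.e. `u * log (1 + x₀) < x₀`.
  have hsq : 1 + x₀ < (1 + u) ^ 2 := by
    have := log_one_add_lt_one_add_half hu.le
    have : x₀ < u * (2 + u) := by simp only [x₀]; nlinarith
    nlinarith
  have : u * log (1 + x₀) < x₀ := by
    have := log_lt_log (by positivity) hsq
    rw [log_pow] at this
    simp only [x₀]; push_cast at this; nlinarith
  linarith

theorem natCast_le_of_one_add_pow_le {n d : ℕ} {L c : ℝ} (hd : 0 < d) (hL : 0 < L) (hc : 0 ≤ c)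
    (h : (1 + L) ^ n ≤ (1 + n * c / d) ^ d) :
    (n : ℝ) ≤ 2 * d / log (1 + L) * log (1 + c / log (1 + L)) := by
  have hl : 0 < log (1 + L) := log_pos (by linarith)
  have hd' : (0 : ℝ) < d := Nat.cast_pos.mpr hd
  have hlog : n * log (1 + L) ≤ d * log (1 + n * c / d) := by
    simpa only [log_pow] using log_le_log (by positivity) h
  rcases hc.eq_or_lt with rfl | hc
  · simp only [mul_zero, zero_div, add_zero, log_one] at hlog ⊢
    nlinarith
  have hx := le_two_mul_mul_log_of_le_mul_log (div_pos hc hl) (x := n * c / d) (by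
    calc n * c / d = c / (d * log (1 + L)) * (n * log (1 + L)) := by field_simp
      _ ≤ c / (d * log (1 + L)) * (d * log (1 + n * c / d)) := by gcongr
      _ = c / log (1 + L) * log (1 + n * c / d) := by field_simp)
  calc (n : ℝ) = d / c * (n * c / d) := by field_simp
    _ ≤ d / c * (2 * (c / log (1 + L)) * log (1 + c / log (1 + L))) := by gcongr
    _ = 2 * d / log (1 + L) * log (1 + c / log (1 + L)) := by field_simp

theorem natCast_le_of_pow_mul_one_add_pow_le {n d : ℕ} {lam L C : ℝ} (hd : 0 < d)
    (hlam : 0 < lam) (hL : 0 < L) (hC : 0 ≤ C)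
    (h : lam ^ d * (1 + L) ^ n ≤ ((lam * d + n * C) / d) ^ d) :
    (n : ℝ) ≤ 2 * d / log (1 + L) * log (1 + C / (log (1 + L) * lam)) := by
  rw [show (lam * d + n * C) / d = lam * (1 + n * (C / lam) / d) by field_simp, mul_pow] at h
  convert natCast_le_of_one_add_pow_le hd hL (div_nonneg hC hlam.le)
    (le_of_mul_le_mul_left h (by positivity)) using 4
  ring

end Real

/-- Elliptical potential count lemma for assortments. -/
theorem stmt_1 (d T K : ℕ) (hd : 0 < d) (X lam L : ℝ) (hlam : 0 < lam) (hL : 0 < L)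
    (S : ℕ → Finset ℕ) (hK : ∀ t, (S t).card ≤ K)
    (z : ℕ → ℕ → Fin d → ℝ)
    (hz : ∀ t a, a ∈ S t → Real.sqrt (z t a ⬝ᵥ z t a) ≤ X)
    (Λ : ℕ → Matrix (Fin d) (Fin d) ℝ)
    (hΛ : ∀ t, Λ t = lam • (1 : Matrix (Fin d) (Fin d) ℝ) +
      ∑ s ∈ Finset.Icc 1 (t - 1), ∑ a ∈ S s, vecMulVec (z s a) (z s a))
    (T₀ : Finset ℕ)
    (hT₀ : ∀ t, t ∈ T₀ ↔ t ∈ Finset.Icc 1 T ∧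
      L ≤ ∑ a ∈ S t, z t a ⬝ᵥ ((Λ t)⁻¹ *ᵥ z t a)) :
    (T₀.card : ℝ) ≤ 2 * d / Real.log (1 + L) *
      Real.log (1 + X ^ 2 * K / (Real.log (1 + L) * lam)) := by
  set A : ℕ → Matrix (Fin d) (Fin d) ℝ := fun s => ∑ a ∈ S s, vecMulVec (z s a) (z s a)
  have hA (s : ℕ) : (A s).PosSemidef := posSemidef_sum_vecMulVec_self _ _
  have hV : (lam • 1 : Matrix (Fin d) (Fin d) ℝ).PosDef := PosDef.one.smul hlam
  have hpot (t : ℕ) (ht : t ∈ T₀) :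
      L ≤ ((lam • 1 + ∑ s ∈ T₀ with s < t, A s)⁻¹ * A t).trace := by
    have hsub : {s ∈ T₀ | s < t} ⊆ Icc 1 (t - 1) := fun s hs => by
      obtain ⟨hsT, hst⟩ := mem_filter.mp hs
      exact mem_Icc.mpr ⟨(mem_Icc.mp ((hT₀ s).mp hsT).1).1, by omega⟩
    have hle : lam • 1 + ∑ s ∈ T₀ with s < t, A s ≤ Λ t := by
      rw [hΛ t]
      exact add_le_add_right (sum_le_sum_of_subset_of_nonneg hsub fun s _ _ => (hA s).nonneg) _
    calc L ≤ ∑ a ∈ S t, z t a ⬝ᵥ (Λ t)⁻¹ *ᵥ z t a := ((hT₀ t).mp ht).2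
      _ = ((Λ t)⁻¹ * A t).trace := by simp only [A, mul_sum, trace_sum, trace_mul_vecMulVec_self]
      _ ≤ _ := trace_inv_mul_sum_vecMulVec_self_antitone
          (hV.add_posSemidef (posSemidef_sum _ fun s _ => hA s)) hle _ _
  have htrace (s : ℕ) : (A s).trace ≤ X ^ 2 * K := by
    grw [trace_sum_vecMulVec_self_le _ _ fun a ha => (sqrt_le_iff.mp (hz s a ha)).2, hK s]
    rw [mul_comm]
  have hsum : (∑ s ∈ T₀, A s).PosSemidef := posSemidef_sum T₀ fun s _ => hA s
  refine natCast_le_of_pow_mul_one_add_pow_le hd hlam hL (by positivity) ?_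
  calc lam ^ d * (1 + L) ^ #T₀ = (lam • 1 : Matrix (Fin d) (Fin d) ℝ).det * (1 + L) ^ #T₀ := by
        simp
    _ ≤ (lam • 1 + ∑ s ∈ T₀, A s).det :=
        det_mul_one_add_pow_card_le_det_add_sum hV hA hL.le T₀ hpot
    _ ≤ ((lam * d + (∑ s ∈ T₀, A s).trace) / d) ^ d := by
        simpa using hsum.det_smul_one_add_le hlam.le
    _ ≤ ((lam * d + #T₀ * (X ^ 2 * K)) / d) ^ d := by
        gcongr
        · exact div_nonneg (add_nonneg (by positivity) hsum.trace_nonneg) (by positivity)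
        · simpa [trace_sum] using sum_le_card_nsmul T₀ _ _ fun s _ => htrace s
end

section
/- Let f: R → R be a strictly increasing twice-differentiable function satisfying |f''(z)| ≤ f'(z) for all z in a bounded interval Z. Then for all z₁, z₂ ∈ Z: f'(z₂) exp(−|z₂ − z₁|) ≤ f'(z₁) ≤ f'(z₂) exp(|z₂ − z₁|). -/
/-!
If `|g'| ≤ g` on an interval, then `g' + g ≥ 0` and `g' - g ≤ 0` there, so `g(x) eˣ` is
monotone and `g(x) e⁻ˣ` is antitone. Comparing these at two points bounds `g(x) / g(y)`
by `e^{|x - y|}` in both directions; the theorem is the case `g = f'`.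
-/

open Real

section

variable {g : ℝ → ℝ} {D : Set ℝ}

theorem monotoneOn_mul_exp_of_neg_le_deriv (hD : Convex ℝ D) (hcont : ContinuousOn g D)
    (hdiff : DifferentiableOn ℝ g (interior D)) (h : ∀ x ∈ interior D, -g x ≤ deriv g x) :
    MonotoneOn (fun x => g x * exp x) D := by
  refine monotoneOn_of_deriv_nonneg hD (hcont.mul continuous_exp.continuousOn)
    (hdiff.mul differentiable_exp.differentiableOn) fun x hx => ?_
  have hgx := (hdiff x hx).differentiableAt (isOpen_interior.mem_nhds hx)
  rw [deriv_fun_mul hgx differentiableAt_exp, Real.deriv_exp, ← add_mul]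
  exact mul_nonneg (by linarith [h x hx]) (exp_pos x).le

theorem antitoneOn_mul_exp_neg_of_deriv_le (hD : Convex ℝ D) (hcont : ContinuousOn g D)
    (hdiff : DifferentiableOn ℝ g (interior D)) (h : ∀ x ∈ interior D, deriv g x ≤ g x) :
    AntitoneOn (fun x => g x * exp (-x)) D := by
  have hexp : Differentiable ℝ fun x : ℝ => exp (-x) := differentiable_exp.comp differentiable_neg
  refine antitoneOn_of_deriv_nonpos hD (hcont.mul hexp.continuous.continuousOn)
    (hdiff.mul hexp.differentiableOn) fun x hx => ?_
  have hgx := (hdiff x hx).differentiableAt (isOpen_interior.mem_nhds hx)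
  rw [deriv_fun_mul hgx hexp.differentiableAt, deriv_exp (hasDerivAt_neg x).differentiableAt,
    deriv_neg'', mul_neg_one, mul_neg, ← sub_eq_add_neg, ← sub_mul]
  exact mul_nonpos_of_nonpos_of_nonneg (by linarith [h x hx]) (exp_pos _).le

theorem le_mul_exp_abs_sub_of_abs_deriv_le (hD : Convex ℝ D) (hcont : ContinuousOn g D)
    (hdiff : DifferentiableOn ℝ g (interior D)) (h : ∀ x ∈ interior D, |deriv g x| ≤ g x)
    {x y : ℝ} (hx : x ∈ D) (hy : y ∈ D) :
    g x ≤ g y * exp |y - x| := by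
  rcases le_total x y with hxy | hyx
  · have hmono := monotoneOn_mul_exp_of_neg_le_deriv hD hcont hdiff
      (fun z hz => (abs_le.mp (h z hz)).1) hx hy hxy
    rw [abs_of_nonneg (sub_nonneg.mpr hxy), exp_sub, ← mul_div_assoc,
      le_div_iff₀ (exp_pos x)]
    exact hmono
  · have hanti := antitoneOn_mul_exp_neg_of_deriv_le hD hcont hdiff
      (fun z hz => (abs_le.mp (h z hz)).2) hy hx hyx
    rw [abs_of_nonpos (sub_nonpos.mpr hyx), neg_sub, show x - y = -y - -x by ring, exp_sub,
      ← mul_div_assoc, le_div_iff₀ (exp_pos _)]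
    exact hanti

end

theorem stmt_3_general (f : ℝ → ℝ) (a b : ℝ)
    (hdiff2 : ∀ z, DifferentiableAt ℝ (deriv f) z)
    (hsc : ∀ z ∈ Set.Icc a b, |deriv (deriv f) z| ≤ deriv f z)
    (z₁ z₂ : ℝ) (h₁ : z₁ ∈ Set.Icc a b) (h₂ : z₂ ∈ Set.Icc a b) :
    deriv f z₂ * Real.exp (-|z₂ - z₁|) ≤ deriv f z₁ ∧
      deriv f z₁ ≤ deriv f z₂ * Real.exp |z₂ - z₁| := by
  have hdiff : Differentiable ℝ (deriv f) := hdiff2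
  have transfer : ∀ {x y}, x ∈ Set.Icc a b → y ∈ Set.Icc a b →
      deriv f x ≤ deriv f y * exp |y - x| :=
    le_mul_exp_abs_sub_of_abs_deriv_le (convex_Icc a b) hdiff.continuous.continuousOn
      hdiff.differentiableOn fun z hz => hsc z (interior_subset hz)
  refine ⟨?_, transfer h₁ h₂⟩
  rw [← le_div_iff₀ (exp_pos _), div_eq_mul_inv, ← exp_neg, neg_neg, abs_sub_comm]
  exact transfer h₂ h₁

/-- Self-concordance transfer lemma. -/
theorem stmt_3 (f : ℝ → ℝ) (a b : ℝ)
    (hmono : StrictMono f)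
    (hdiff : ∀ z, DifferentiableAt ℝ f z)
    (hdiff2 : ∀ z, DifferentiableAt ℝ (deriv f) z)
    (hsc : ∀ z ∈ Set.Icc a b, |deriv (deriv f) z| ≤ deriv f z)
    (z₁ z₂ : ℝ) (h₁ : z₁ ∈ Set.Icc a b) (h₂ : z₂ ∈ Set.Icc a b) :
    deriv f z₂ * Real.exp (-|z₂ - z₁|) ≤ deriv f z₁ ∧
      deriv f z₁ ≤ deriv f z₂ * Real.exp |z₂ - z₁| :=
  stmt_3_general f a b hdiff2 hsc z₁ z₂ h₁ h₂
end

section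
/- Let S be a finite set of actions with feature vectors φ_a ∈ R^d, and for θ ∈ R^d let P_θ(·|S) denote the Plackett–Luce distribution over permutations σ of S, given by P_θ(σ|S) = Π_{j=1}^{|S|} exp(φ_{σ_j}ᵀθ) / Σ_{k=j}^{|S|} exp(φ_{σ_k}ᵀθ). Then for any θ, θ' ∈ R^d, the KL divergence satisfies D_KL(P_θ(·|S) ‖ P_{θ'}(·|S)) ≤ (K/2) Σ_{a∈S} (φ_aᵀ(θ'−θ))², where K ≥ |S|. -/
open Matrix Finset Real


lemma fin_sum_Ici_succ {n : ℕ} (i : Fin n) (f : Fin (n+1) → ℝ) :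
    ∑ k ∈ Finset.Ici i.succ, f k = ∑ k ∈ Finset.Ici i, f k.succ := by
  rw [show (Finset.Ici i.succ) = (Finset.Ici i).map ⟨Fin.succ, Fin.succ_injective n⟩ by
    ext k
    simp only [mem_map, mem_Ici, Function.Embedding.coeFn_mk]
    constructor
    · intro hk
      have hk0 : k ≠ 0 := by rintro rfl; simp [Fin.le_def] at hk
      obtain ⟨a, rfl⟩ := Fin.exists_succ_eq.mpr hk0
      exact ⟨a, Fin.succ_le_succ_iff.mp hk, rfl⟩
    · rintro ⟨a, ha, rfl⟩
      exact Fin.succ_le_succ_iff.mpr ha]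
  rw [Finset.sum_map]
  rfl

lemma pl_sum_eq_one : ∀ (m : ℕ) (v : Fin m → ℝ),
    ∑ σ : Equiv.Perm (Fin m), ∏ j : Fin m,
      Real.exp (v (σ j)) / ∑ k ∈ Finset.Ici j, Real.exp (v (σ k)) = 1 := by
  intro m
  induction m with
  | zero =>
    intro v
    rw [Finset.sum_eq_single_of_mem 1 (Finset.mem_univ _)]
    · simp
    · intro σ _ _
      exact absurd (Subsingleton.elim σ 1) ‹σ ≠ 1›
  | succ n ih =>
    intro v
    rw [← Equiv.Perm.decomposeFin.symm.sum_comp, Fintype.sum_prod_type]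
    have hpos : (0:ℝ) < ∑ a : Fin (n+1), Real.exp (v a) :=
      Finset.sum_pos (fun a _ => Real.exp_pos _) ⟨0, Finset.mem_univ _⟩
    have key : ∀ p : Fin (n+1),
        ∑ e : Equiv.Perm (Fin n), ∏ j : Fin (n+1),
          Real.exp (v ((Equiv.Perm.decomposeFin.symm (p, e)) j)) /
            ∑ k ∈ Finset.Ici j, Real.exp (v ((Equiv.Perm.decomposeFin.symm (p, e)) k)) =
        Real.exp (v p) / ∑ a : Fin (n+1), Real.exp (v a) := by
      intro p
      have step : ∀ e : Equiv.Perm (Fin n),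
          (∏ j : Fin (n+1),
            Real.exp (v ((Equiv.Perm.decomposeFin.symm (p, e)) j)) /
              ∑ k ∈ Finset.Ici j, Real.exp (v ((Equiv.Perm.decomposeFin.symm (p, e)) k))) =
          (Real.exp (v p) / ∑ a : Fin (n+1), Real.exp (v a)) *
          ∏ i : Fin n,
            Real.exp ((fun b => v (Equiv.swap 0 p b.succ)) (e i)) /
              ∑ k ∈ Finset.Ici i, Real.exp ((fun b => v (Equiv.swap 0 p b.succ)) (e k)) := by
        intro e
        rw [Fin.prod_univ_succ]
        congr 1
        · rw [Equiv.Perm.decomposeFin_symm_apply_zero]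
          congr 1
          rw [show (Finset.Ici (0 : Fin (n+1))) = Finset.univ from Finset.ext fun k => by simp [Fin.zero_le]]
          exact Equiv.sum_comp _ (fun a => Real.exp (v a))
        · apply Finset.prod_congr rfl
          intro i _
          rw [fin_sum_Ici_succ]
          simp only [Equiv.Perm.decomposeFin_symm_apply_succ]
      rw [Finset.sum_congr rfl (fun e _ => step e), ← Finset.mul_sum,
        ih (fun b => v (Equiv.swap 0 p b.succ)), mul_one]
    rw [Finset.sum_congr rfl (fun p _ => key p), ← Finset.sum_div, div_self (ne_of_gt hpos)]

section PL
variable {n : ℕ} (x δ : Fin n → ℝ)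

noncomputable def plD (σ : Equiv.Perm (Fin n)) (j : Fin n) (t : ℝ) : ℝ :=
  ∑ k ∈ Finset.Ici j, Real.exp (x (σ k) + t * δ (σ k))

noncomputable def plN (σ : Equiv.Perm (Fin n)) (j : Fin n) (t : ℝ) : ℝ :=
  ∑ k ∈ Finset.Ici j, δ (σ k) * Real.exp (x (σ k) + t * δ (σ k))

noncomputable def plM (σ : Equiv.Perm (Fin n)) (j : Fin n) (t : ℝ) : ℝ :=
  ∑ k ∈ Finset.Ici j, δ (σ k) * (δ (σ k) * Real.exp (x (σ k) + t * δ (σ k)))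

noncomputable def plF (σ : Equiv.Perm (Fin n)) (t : ℝ) : ℝ :=
  -(∑ a, (x a + t * δ a)) + ∑ j, Real.log (plD x δ σ j t)

noncomputable def plF' (σ : Equiv.Perm (Fin n)) (t : ℝ) : ℝ :=
  -(∑ a, δ a) + ∑ j, plN x δ σ j t / plD x δ σ j t

noncomputable def plF'' (σ : Equiv.Perm (Fin n)) (t : ℝ) : ℝ :=
  ∑ j, (plM x δ σ j t * plD x δ σ j t - plN x δ σ j t * plN x δ σ j t) / (plD x δ σ j t) ^ 2

noncomputable def plQ (t : ℝ) (σ : Equiv.Perm (Fin n)) : ℝ :=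
  ∏ j, Real.exp (x (σ j) + t * δ (σ j)) / plD x δ σ j t

noncomputable def plg (t : ℝ) : ℝ := ∑ σ, plQ x δ 0 σ * plF x δ σ t

lemma plD_pos (σ : Equiv.Perm (Fin n)) (j : Fin n) (t : ℝ) : 0 < plD x δ σ j t :=
  Finset.sum_pos (fun k _ => Real.exp_pos _) ⟨j, Finset.mem_Ici.mpr le_rfl⟩

lemma hasDerivAt_affine (c d t : ℝ) : HasDerivAt (fun t : ℝ => c + t * d) d t := by
  simpa using (hasDerivAt_mul_const d).const_add c

lemma hasDerivAt_plD (σ : Equiv.Perm (Fin n)) (j : Fin n) (t : ℝ) :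
    HasDerivAt (plD x δ σ j) (plN x δ σ j t) t := by
  unfold plD plN
  exact HasDerivAt.fun_sum fun k _ => by
    simpa [mul_comm] using (hasDerivAt_affine (x (σ k)) (δ (σ k)) t).exp

lemma hasDerivAt_plN (σ : Equiv.Perm (Fin n)) (j : Fin n) (t : ℝ) :
    HasDerivAt (plN x δ σ j) (plM x δ σ j t) t := by
  unfold plN plM
  exact HasDerivAt.fun_sum fun k _ => by
    simpa [mul_comm] using ((hasDerivAt_affine (x (σ k)) (δ (σ k)) t).exp).const_mul (δ (σ k))

lemma hasDerivAt_plF (σ : Equiv.Perm (Fin n)) (t : ℝ) :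
    HasDerivAt (plF x δ σ) (plF' x δ σ t) t := by
  unfold plF plF'
  exact ((HasDerivAt.fun_sum fun a _ => hasDerivAt_affine (x a) (δ a) t).fun_neg).fun_add
    (HasDerivAt.fun_sum fun j _ =>
      (hasDerivAt_plD x δ σ j t).log (plD_pos x δ σ j t).ne')

lemma hasDerivAt_plF' (σ : Equiv.Perm (Fin n)) (t : ℝ) :
    HasDerivAt (plF' x δ σ) (plF'' x δ σ t) t := by
  unfold plF' plF''
  have h := HasDerivAt.fun_sum (fun j (_ : j ∈ Finset.univ) =>
    (hasDerivAt_plN x δ σ j t).div (hasDerivAt_plD x δ σ j t) (plD_pos x δ σ j t).ne')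
  simpa using (hasDerivAt_const t (-(∑ a, δ a))).fun_add h

lemma plF''_le (σ : Equiv.Perm (Fin n)) (t : ℝ) :
    plF'' x δ σ t ≤ n * ∑ a, (δ a) ^ 2 := by
  unfold plF''
  have hterm : ∀ j : Fin n,
      (plM x δ σ j t * plD x δ σ j t - plN x δ σ j t * plN x δ σ j t) / (plD x δ σ j t) ^ 2
        ≤ ∑ a, (δ a) ^ 2 := by
    intro j
    have hD := plD_pos x δ σ j t
    have h1 : (plM x δ σ j t * plD x δ σ j t - plN x δ σ j t * plN x δ σ j t) / (plD x δ σ j t) ^ 2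
        ≤ plM x δ σ j t / plD x δ σ j t := by
      rw [div_le_div_iff₀ (by positivity) hD]
      nlinarith [sq_nonneg (plN x δ σ j t), sq_nonneg (plD x δ σ j t)]
    have h2 : plM x δ σ j t / plD x δ σ j t ≤ ∑ k ∈ Finset.Ici j, (δ (σ k)) ^ 2 := by
      rw [div_le_iff₀ hD]
      unfold plM plD
      rw [Finset.sum_mul]
      apply Finset.sum_le_sum
      intro k hk
      have he : Real.exp (x (σ k) + t * δ (σ k)) ≤ plD x δ σ j t :=
        Finset.single_le_sum (f := fun i => Real.exp (x (σ i) + t * δ (σ i))) (fun i _ => (Real.exp_pos _).le) hk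
      calc δ (σ k) * (δ (σ k) * Real.exp (x (σ k) + t * δ (σ k)))
          = (δ (σ k))^2 * Real.exp (x (σ k) + t * δ (σ k)) := by ring
        _ ≤ (δ (σ k))^2 * plD x δ σ j t := by
            exact mul_le_mul_of_nonneg_left he (sq_nonneg _)
    have h3 : ∑ k ∈ Finset.Ici j, (δ (σ k)) ^ 2 ≤ ∑ a, (δ a) ^ 2 := by
      calc ∑ k ∈ Finset.Ici j, (δ (σ k)) ^ 2 ≤ ∑ k, (δ (σ k)) ^ 2 :=
            Finset.sum_le_sum_of_subset_of_nonneg (Finset.subset_univ _)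
              (fun _ _ _ => sq_nonneg _)
        _ = ∑ a, (δ a) ^ 2 := Equiv.sum_comp σ (fun a => (δ a)^2)
    linarith
  calc ∑ j, (plM x δ σ j t * plD x δ σ j t - plN x δ σ j t * plN x δ σ j t) / (plD x δ σ j t) ^ 2
      ≤ ∑ _j : Fin n, ∑ a, (δ a) ^ 2 := Finset.sum_le_sum fun j _ => hterm j
    _ = n * ∑ a, (δ a) ^ 2 := by simp [Finset.sum_const, nsmul_eq_mul]

lemma plQ_pos (t : ℝ) (σ : Equiv.Perm (Fin n)) : 0 < plQ x δ t σ :=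
  Finset.prod_pos fun j _ => div_pos (Real.exp_pos _) (plD_pos x δ σ j t)

lemma plQ_sum (hone : ∀ v : Fin n → ℝ,
    ∑ σ : Equiv.Perm (Fin n), ∏ j : Fin n,
      Real.exp (v (σ j)) / ∑ k ∈ Finset.Ici j, Real.exp (v (σ k)) = 1)
    (t : ℝ) : ∑ σ, plQ x δ t σ = 1 := by
  simpa [plQ, plD] using hone (fun a => x a + t * δ a)

lemma log_plQ (t : ℝ) (σ : Equiv.Perm (Fin n)) :
    Real.log (plQ x δ t σ) = -(plF x δ σ t) := by
  unfold plQ plF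
  rw [Real.log_prod (fun j _ => (div_pos (Real.exp_pos _) (plD_pos x δ σ j t)).ne')]
  have : ∀ j : Fin n, Real.log (Real.exp (x (σ j) + t * δ (σ j)) / plD x δ σ j t)
      = (x (σ j) + t * δ (σ j)) - Real.log (plD x δ σ j t) := by
    intro j
    rw [Real.log_div (Real.exp_ne_zero _) (plD_pos x δ σ j t).ne', Real.log_exp]
  rw [Finset.sum_congr rfl (fun j _ => this j), Finset.sum_sub_distrib,
    Equiv.sum_comp σ (fun a => x a + t * δ a)]
  ring

noncomputable def plg' (t : ℝ) : ℝ := ∑ σ, plQ x δ 0 σ * plF' x δ σ t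

lemma hasDerivAt_plg (t : ℝ) : HasDerivAt (plg x δ) (plg' x δ t) t := by
  unfold plg plg'
  exact HasDerivAt.fun_sum fun σ _ => (hasDerivAt_plF x δ σ t).const_mul _

lemma hasDerivAt_plg' (t : ℝ) :
    HasDerivAt (plg' x δ) (∑ σ, plQ x δ 0 σ * plF'' x δ σ t) t := by
  unfold plg'
  exact HasDerivAt.fun_sum fun σ _ => (hasDerivAt_plF' x δ σ t).const_mul _

lemma plg_sub_eq (t : ℝ) :
    plg x δ t - plg x δ 0 = ∑ σ, plQ x δ 0 σ * Real.log (plQ x δ 0 σ / plQ x δ t σ) := by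
  unfold plg
  rw [← Finset.sum_sub_distrib]
  apply Finset.sum_congr rfl
  intro σ _
  rw [Real.log_div (plQ_pos x δ 0 σ).ne' (plQ_pos x δ t σ).ne', log_plQ, log_plQ]
  ring

lemma plg_sub_nonneg (hone : ∀ v : Fin n → ℝ,
    ∑ σ : Equiv.Perm (Fin n), ∏ j : Fin n,
      Real.exp (v (σ j)) / ∑ k ∈ Finset.Ici j, Real.exp (v (σ k)) = 1)
    (t : ℝ) : 0 ≤ plg x δ t - plg x δ 0 := by
  rw [plg_sub_eq]
  have key : ∀ σ : Equiv.Perm (Fin n),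
      plQ x δ 0 σ - plQ x δ t σ ≤ plQ x δ 0 σ * Real.log (plQ x δ 0 σ / plQ x δ t σ) := by
    intro σ
    have hp := plQ_pos x δ 0 σ
    have hq := plQ_pos x δ t σ
    have h1 : Real.log (plQ x δ t σ / plQ x δ 0 σ) ≤ plQ x δ t σ / plQ x δ 0 σ - 1 :=
      Real.log_le_sub_one_of_pos (div_pos hq hp)
    have h2 : Real.log (plQ x δ 0 σ / plQ x δ t σ) = - Real.log (plQ x δ t σ / plQ x δ 0 σ) := by
      rw [← Real.log_inv, inv_div]
    have h3 : plQ x δ 0 σ * (plQ x δ t σ / plQ x δ 0 σ) = plQ x δ t σ :=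
      mul_div_cancel₀ _ hp.ne'
    nlinarith
  calc (0:ℝ) = ∑ σ, (plQ x δ 0 σ - plQ x δ t σ) := by
        rw [Finset.sum_sub_distrib, plQ_sum x δ hone, plQ_sum x δ hone]; ring
    _ ≤ _ := Finset.sum_le_sum fun σ _ => key σ

lemma plg_bound (hone : ∀ v : Fin n → ℝ,
    ∑ σ : Equiv.Perm (Fin n), ∏ j : Fin n,
      Real.exp (v (σ j)) / ∑ k ∈ Finset.Ici j, Real.exp (v (σ k)) = 1) :
    plg x δ 1 - plg x δ 0 ≤ (n * ∑ a, (δ a) ^ 2) / 2 := by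
  set C : ℝ := n * ∑ a, (δ a) ^ 2 with hC
  have hgpp : ∀ t : ℝ, ∑ σ, plQ x δ 0 σ * plF'' x δ σ t ≤ C := by
    intro t
    calc ∑ σ, plQ x δ 0 σ * plF'' x δ σ t ≤ ∑ σ, plQ x δ 0 σ * C :=
          Finset.sum_le_sum fun σ _ =>
            mul_le_mul_of_nonneg_left (plF''_le x δ σ t) (plQ_pos x δ 0 σ).le
      _ = C := by rw [← Finset.sum_mul, plQ_sum x δ hone, one_mul]
  have hg'0 : plg' x δ 0 = 0 := by
    have hmin : IsLocalMin (plg x δ) 0 :=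
      Filter.Eventually.of_forall fun t => by linarith [plg_sub_nonneg x δ hone t]
    exact hmin.hasDerivAt_eq_zero (hasDerivAt_plg x δ 0)
  -- h1 t = C * t - plg' t  is monotone, h1 0 = 0
  have hd1 : ∀ t : ℝ, HasDerivAt (fun s => C * s - plg' x δ s)
      (C - ∑ σ, plQ x δ 0 σ * plF'' x δ σ t) t := by
    intro t
    simpa using ((hasDerivAt_id t).const_mul C).fun_sub (hasDerivAt_plg' x δ t)
  have hmono1 : Monotone (fun s => C * s - plg' x δ s) := by
    apply monotone_of_deriv_nonneg
    · exact fun t => (hd1 t).differentiableAt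
    · intro t
      rw [(hd1 t).deriv]
      linarith [hgpp t]
  have h1nonneg : ∀ t : ℝ, 0 ≤ t → 0 ≤ C * t - plg' x δ t := by
    intro t ht
    have := hmono1 ht
    simpa [hg'0] using this
  -- h2 t = C/2 * t^2 - (plg t - plg 0)  is monotone on [0, ∞)
  have hd2 : ∀ t : ℝ, HasDerivAt (fun s => C / 2 * s ^ 2 - (plg x δ s - plg x δ 0))
      (C * t - plg' x δ t) t := by
    intro t
    have := ((hasDerivAt_pow 2 t).const_mul (C / 2)).fun_sub
      ((hasDerivAt_plg x δ t).fun_sub (hasDerivAt_const t (plg x δ 0)))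
    exact this.congr_deriv (by rw [show (2:ℕ) - 1 = 1 from rfl]; push_cast; ring)
  have hmono2 : MonotoneOn (fun s => C / 2 * s ^ 2 - (plg x δ s - plg x δ 0)) (Set.Ici 0) := by
    apply monotoneOn_of_deriv_nonneg (convex_Ici 0)
    · exact fun t _ => ((hd2 t).differentiableAt).continuousAt.continuousWithinAt
    · exact fun t _ => ((hd2 t).differentiableAt).differentiableWithinAt
    · intro t ht
      rw [interior_Ici] at ht
      rw [(hd2 t).deriv]
      exact h1nonneg t (le_of_lt ht)
  have := hmono2 (Set.mem_Ici.mpr le_rfl) (Set.mem_Ici.mpr zero_le_one) zero_le_one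
  simp only [pow_two] at this
  nlinarith [this]

end PL

/-- KL divergence bound between Plackett–Luce distributions. -/
theorem stmt_6 (d m K : ℕ) (hm : m ≤ K) (φ : Fin m → Fin d → ℝ)
    (P : (Fin d → ℝ) → Equiv.Perm (Fin m) → ℝ)
    (hP : ∀ θ σ, P θ σ = ∏ j : Fin m,
      Real.exp (φ (σ j) ⬝ᵥ θ) / ∑ k ∈ Finset.Ici j, Real.exp (φ (σ k) ⬝ᵥ θ))
    (θ θ' : Fin d → ℝ) :
    ∑ σ : Equiv.Perm (Fin m), P θ σ * Real.log (P θ σ / P θ' σ) ≤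
      (K / 2 : ℝ) * ∑ a : Fin m, (φ a ⬝ᵥ (θ' - θ)) ^ 2 := by
  set x : Fin m → ℝ := fun a => φ a ⬝ᵥ θ with hx
  set δ : Fin m → ℝ := fun a => φ a ⬝ᵥ (θ' - θ) with hδ
  have hone := pl_sum_eq_one m
  have hv : ∀ a, x a + 1 * δ a = φ a ⬝ᵥ θ' := by
    intro a
    simp [hx, hδ, dotProduct_sub]
  have hPθ : ∀ σ, P θ σ = plQ x δ 0 σ := by
    intro σ
    rw [hP]
    simp only [plQ, plD, zero_mul, add_zero, hx]
  have hPθ' : ∀ σ, P θ' σ = plQ x δ 1 σ := by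
    intro σ
    rw [hP]
    simp only [plQ, plD, hv]
  have key : ∑ σ, plQ x δ 0 σ * Real.log (plQ x δ 0 σ / plQ x δ 1 σ)
      ≤ ((m : ℝ) * ∑ a, (δ a) ^ 2) / 2 := by
    rw [← plg_sub_eq]
    exact plg_bound x δ hone
  have hS : 0 ≤ ∑ a, (δ a) ^ 2 := Finset.sum_nonneg fun a _ => sq_nonneg _
  have hmK : (m : ℝ) ≤ K := Nat.cast_le.mpr hm
  calc ∑ σ : Equiv.Perm (Fin m), P θ σ * Real.log (P θ σ / P θ' σ)
      = ∑ σ, plQ x δ 0 σ * Real.log (plQ x δ 0 σ / plQ x δ 1 σ) := by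
        apply Finset.sum_congr rfl
        intro σ _
        rw [hPθ, hPθ']
    _ ≤ ((m : ℝ) * ∑ a, (δ a) ^ 2) / 2 := key
    _ ≤ (K / 2 : ℝ) * ∑ a : Fin m, (φ a ⬝ᵥ (θ' - θ)) ^ 2 := by
        have : ∑ a : Fin m, (φ a ⬝ᵥ (θ' - θ)) ^ 2 = ∑ a, (δ a) ^ 2 := by
          simp [hδ]
        rw [this]
        nlinarith
end

section
/- Let P be a probability distribution on a finite set S of actions with feature map φ: S → R^d, and let (a, a') be two independent draws from P. Then for any fixed reference action ā ∈ S with P(ā) ≥ p₀ > 0, E_{(a,a')∼P×P}[(φ(a)−φ(a'))(φ(a)−φ(a'))ᵀ] ⪰ p₀ · Σ_{b∈S} P(b) (φ(b)−φ(ā))(φ(b)−φ(ā))ᵀ in the positive semidefinite order. -/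
/-!
Subtracting the anchored term only lowers the weight of each pair `(b, ā)` in the double sum
from `P b * P ā` to `P b * (P ā - p₀) ≥ 0`. The difference is therefore a nonnegative
combination of outer products `v vᵀ`, each of which is positive semidefinite.
-/

open Matrix Finset

theorem Matrix.posSemidef_sum_smul_vecMulVec_self {ι n : Type*} [Fintype n] (s : Finset ι)
    (w : ι → ℝ) (v : ι → n → ℝ) (hw : ∀ i ∈ s, 0 ≤ w i) :
    (∑ i ∈ s, w i • vecMulVec (v i) (v i)).PosSemidef :=
  posSemidef_sum s fun i hi => by
    simpa using (posSemidef_vecMulVec_self_star (v i)).smul (hw i hi)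

theorem sum_sum_smul_sub_smul_sum_anchor {ι M : Type*} [Fintype ι] [DecidableEq ι]
    [AddCommGroup M] [Module ℝ M] (P : ι → ℝ) (V : ι → ι → M) (a : ι) (c : ℝ) :
    (∑ i, ∑ k, (P i * P k) • V i k) - c • ∑ i, P i • V i a =
      ∑ i, ∑ k, (P i * (P k - if k = a then c else 0)) • V i k := by
  simp only [mul_sub, sub_smul, sum_sub_distrib, mul_ite, mul_zero, ite_smul, zero_smul,
    sum_ite_eq', mem_univ, if_true, smul_sum, smul_smul, mul_comm c]

theorem stmt_9_general (d m : ℕ) (φ : Fin m → Fin d → ℝ)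
    (P : Fin m → ℝ) (hP0 : ∀ b, 0 ≤ P b)
    (abar : Fin m) (p₀ : ℝ) (habar : p₀ ≤ P abar) :
    ((∑ i : Fin m, ∑ k : Fin m, (P i * P k) • vecMulVec (φ i - φ k) (φ i - φ k)) -
      p₀ • ∑ b : Fin m, P b • vecMulVec (φ b - φ abar) (φ b - φ abar)).PosSemidef := by
  rw [sum_sum_smul_sub_smul_sum_anchor P (fun i k => vecMulVec (φ i - φ k) (φ i - φ k))]
  refine posSemidef_sum _ fun i _ =>
    posSemidef_sum_smul_vecMulVec_self _ _ (fun k => φ i - φ k) fun k _ => ?_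
  refine mul_nonneg (hP0 i) ?_
  split_ifs with hk
  · subst hk; linarith
  · simpa using hP0 k

/-- The expected outer product of feature differences of two i.i.d. draws
dominates (in the PSD order) the anchored form, up to the anchor probability. -/
theorem stmt_9 (d m : ℕ) (φ : Fin m → Fin d → ℝ)
    (P : Fin m → ℝ) (hP0 : ∀ b, 0 ≤ P b) (hP1 : ∑ b : Fin m, P b = 1)
    (abar : Fin m) (p₀ : ℝ) (hp₀ : 0 < p₀) (habar : p₀ ≤ P abar) :
    ((∑ i : Fin m, ∑ k : Fin m, (P i * P k) • vecMulVec (φ i - φ k) (φ i - φ k)) -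
      p₀ • ∑ b : Fin m, P b • vecMulVec (φ b - φ abar) (φ b - φ abar)).PosSemidef :=
  stmt_9_general d m φ P hP0 abar p₀ habar
end
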